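/- arXiv:2002.00246 — 3 statements merged into one kernel-verified Lean document; each statement's English description precedes it below -/
import Mathlib

section
/- The number of Stirling permutations of size n equals the double factorial (2n-1)!!. -/
/-- A Stirling permutation of size `n`: a word in which each letter `1, …, n` appears
exactly twice (so of length `2n`), and for each letter, every letter lying between its
two occurrences is greater than it. -/
def IsStirlingPerm (n : ℕ) (w : List ℕ) : Prop :=
  w.length = 2 * n ∧ (∀ k ∈ Finset.Icc 1 n, w.count k = 2) ∧
    ∀ i j l : Fin w.length, i < j → j < l → w.get i = w.get l → w.get i < w.get j

/-!
The Stirling condition says that the word contains no subsequence `k m k` with `m ≤ k`.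
In a Stirling permutation of size `n + 1` the two copies of the largest letter must therefore
be adjacent, and deleting them leaves a Stirling permutation of size `n`. Conversely, since all
other letters are smaller, the block `(n+1)(n+1)` can be inserted into any of the `2n + 1` gaps
of a Stirling permutation of size `n`, and the position and the remaining word are recovered
from the first occurrence of `n + 1`. So the count is multiplied by `2n + 1` at each step.
-/

open List

namespace List

variable {α : Type*}

def insertPair (a : α) (l : List α) (i : ℕ) : List α :=
  l.take i ++ a :: a :: l.drop i

lemma coe_insertPair (a : α) (l : List α) (i : ℕ) :
    (insertPair a l i : Multiset α) = a ::ₘ a ::ₘ l := by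
  rw [insertPair, Multiset.coe_eq_coe.mpr (perm_middle.trans (perm_middle.cons a)),
    take_append_drop]
  rfl

lemma mem_insertPair {a x : α} {l : List α} {i : ℕ} :
    x ∈ insertPair a l i ↔ x = a ∨ x ∈ l := by
  rw [← Multiset.mem_coe, coe_insertPair]
  simp

lemma insertPair_append_length (a : α) (A B : List α) :
    insertPair a (A ++ B) A.length = A ++ a :: a :: B := by
  simp [insertPair]

lemma take_append_drop_insertPair (a : α) {l : List α} {i : ℕ} (hi : i ≤ l.length) :
    (insertPair a l i).take i ++ (insertPair a l i).drop (i + 2) = l := by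
  obtain ⟨A, B, rfl, rfl⟩ : ∃ A B, l = A ++ B ∧ A.length = i :=
    ⟨l.take i, l.drop i, (take_append_drop i l).symm, length_take_of_le hi⟩
  rw [insertPair_append_length, take_left' rfl,
    show A ++ a :: a :: B = (A ++ [a, a]) ++ B by simp, drop_left' (by simp)]

lemma idxOf_insertPair [BEq α] [LawfulBEq α] {a : α} {l : List α} {i : ℕ} (ha : a ∉ l)
    (hi : i ≤ l.length) : (insertPair a l i).idxOf a = i := by
  rw [insertPair, idxOf_append_of_notMem (fun h => ha (mem_of_mem_take h)), idxOf_cons_self,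
    length_take_of_le hi, add_zero]

lemma insertPair_inj [BEq α] [LawfulBEq α] {a : α} {l l' : List α} {i i' : ℕ} (ha : a ∉ l)
    (ha' : a ∉ l') (hi : i ≤ l.length) (hi' : i' ≤ l'.length)
    (h : insertPair a l i = insertPair a l' i') : l = l' ∧ i = i' := by
  obtain rfl : i = i' := by rw [← idxOf_insertPair ha hi, h, idxOf_insertPair ha' hi']
  refine ⟨?_, rfl⟩
  rw [← take_append_drop_insertPair a hi, h, take_append_drop_insertPair a hi']

lemma sublist_insertPair (a : α) (l : List α) (i : ℕ) : l <+ insertPair a l i := by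
  conv_lhs => rw [← take_append_drop i l]
  exact ((sublist_cons_self a _).trans (sublist_cons_self a _)).append_left _

lemma filter_insertPair (p : α → Bool) (a : α) (l : List α) (i : ℕ) (ha : p a = false) :
    (insertPair a l i).filter p = l.filter p := by
  rw [insertPair, filter_append, filter_cons_of_neg (by simp [ha]),
    filter_cons_of_neg (by simp [ha]), ← filter_append, take_append_drop]

lemma not_sublist_insertPair {a m : α} {l : List α} (ha : a ∉ l) (i : ℕ) :
    ¬ [a, m, a] <+ insertPair a l i := by
  rw [insertPair, sublist_append_iff]
  rintro ⟨_ | ⟨x, s⟩, u, h, hs, hu⟩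
  · obtain rfl : u = [a, m, a] := by simpa using h.symm
    exact ha (mem_of_mem_drop (singleton_sublist.1 hu.of_cons_cons.of_cons_cons))
  · obtain rfl : x = a := by simp_all
    exact ha (mem_of_mem_take (hs.subset mem_cons_self))

end List

section IsStirling

variable {α : Type*} [LinearOrder α]

def IsStirling (w : List α) : Prop :=
  ∀ ⦃k m : α⦄, [k, m, k] <+ w → k < m

lemma forall_get_lt_iff_isStirling {w : List α} :
    (∀ i j l : Fin w.length, i < j → j < l → w.get i = w.get l → w.get i < w.get j) ↔
      IsStirling w := by
  simp only [IsStirling, sublist_iff_exists_fin_orderEmbedding_get_eq]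
  constructor
  · rintro H k m ⟨f, hf⟩
    have h0 := hf 0
    have h1 := hf 1
    have h2 := hf 2
    simp only [get_eq_getElem] at h0 h1 h2
    simpa [← h0, ← h1] using H (f 0) (f 1) (f 2) (f.lt_iff_lt.2 (by simp))
      (f.lt_iff_lt.2 (by simp [Fin.lt_def])) (by simp [← h0, ← h2])
  · intro H i j l hij hjl he
    refine H ⟨OrderEmbedding.ofStrictMono ![i, j, l] ?_, ?_⟩
    · exact Fin.strictMono_iff_lt_succ.2 (by simp [Fin.forall_fin_two, hij, hjl])
    · simp only [get_eq_getElem] at he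
      intro ix
      fin_cases ix <;> simp [he]

lemma IsStirling.sublist {l l' : List α} (h : IsStirling l) (hs : l' <+ l) : IsStirling l' :=
  fun _ _ hkm => h (hkm.trans hs)

lemma IsStirling.insertPair {a : α} {l : List α} (h : IsStirling l) (hlt : ∀ x ∈ l, x < a)
    (i : ℕ) : IsStirling (l.insertPair a i) := by
  have ha : a ∉ l := fun ha => (hlt a ha).false
  intro k m hs
  have hk : k = a ∨ k ∈ l := mem_insertPair.1 (hs.subset (by simp))
  have hm : m = a ∨ m ∈ l := mem_insertPair.1 (hs.subset (by simp))
  rcases hk with rfl | hk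
  · exact absurd hs (not_sublist_insertPair ha i)
  rcases hm with rfl | hm
  · exact hlt k hk
  have hka : k ≠ a := fun hka => ha (hka ▸ hk)
  have hma : m ≠ a := fun hma => ha (hma ▸ hm)
  have hfilt := hs.filter (fun x => x ≠ a)
  rw [filter_insertPair _ _ _ _ (by simp),
    (filter_eq_self (l := l)).2 fun x hx => by simpa using (hlt x hx).ne] at hfilt
  exact h (by simpa [hka, hma] using hfilt)

lemma IsStirling.exists_eq_append_cons_cons {a : α} {v : List α} (h : IsStirling v)
    (hle : ∀ x ∈ v, x ≤ a) (ha : v.count a = 2) : ∃ A B, v = A ++ a :: a :: B := by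
  have adjacent : ∀ A C B, v = A ++ a :: (C ++ a :: B) → C = [] := by
    rintro A C B rfl
    refine eq_nil_iff_forall_not_mem.2 fun c hc => ?_
    have hsub : [a, c, a] <+ A ++ a :: (C ++ a :: B) :=
      (((singleton_sublist.2 hc).append (singleton_sublist.2 mem_cons_self)).cons_cons a).trans
        (sublist_append_right A _)
    exact (h hsub).not_ge (hle c (by simp [hc]))
  obtain ⟨s, t, rfl⟩ := append_of_mem (count_pos_iff.1 (ha ▸ two_pos))
  by_cases ht : a ∈ t
  · obtain ⟨C, B, rfl⟩ := append_of_mem ht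
    obtain rfl := adjacent s C B rfl
    exact ⟨s, B, rfl⟩
  · have hs : a ∈ s := by
      simp [count_append, count_eq_zero_of_not_mem ht] at ha
      exact count_pos_iff.1 (by omega)
    obtain ⟨A, C, rfl⟩ := append_of_mem hs
    obtain rfl := adjacent A C t (by simp)
    exact ⟨A, t, by simp⟩

end IsStirling

lemma two_nsmul_Icc_val_succ (n : ℕ) :
    2 • (Finset.Icc 1 (n + 1)).val = (n + 1) ::ₘ (n + 1) ::ₘ 2 • (Finset.Icc 1 n).val := by
  rw [← Finset.insert_Icc_right_eq_Icc_add_one (by omega), Finset.insert_val_of_notMem (by simp),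
    two_nsmul, two_nsmul, Multiset.cons_add, Multiset.add_cons]

lemma coe_eq_two_nsmul_Icc_val_iff {n : ℕ} {w : List ℕ} :
    (w : Multiset ℕ) = 2 • (Finset.Icc 1 n).val ↔
      w.length = 2 * n ∧ ∀ k ∈ Finset.Icc 1 n, w.count k = 2 := by
  have hcount (k : ℕ) :
      (2 • (Finset.Icc 1 n).val).count k = if k ∈ Finset.Icc 1 n then 2 else 0 := by
    rw [Multiset.count_nsmul, Multiset.count_eq_of_nodup (Finset.nodup _)]
    split_ifs <;> simp_all
  constructor
  · intro h
    refine ⟨by simpa using congrArg Multiset.card h, fun k hk => ?_⟩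
    rw [← Multiset.coe_count, h, hcount, if_pos hk]
  · rintro ⟨hlen, hk⟩
    refine (Multiset.eq_of_le_of_card_le (Multiset.le_iff_count.2 fun k => ?_) ?_).symm
    · rw [hcount]
      split_ifs with h
      · rw [Multiset.coe_count, hk k h]
      · exact Nat.zero_le _
    · simp [hlen]

lemma isStirlingPerm_iff {n : ℕ} {w : List ℕ} :
    IsStirlingPerm n w ↔ (w : Multiset ℕ) = 2 • (Finset.Icc 1 n).val ∧ IsStirling w := by
  rw [IsStirlingPerm, coe_eq_two_nsmul_Icc_val_iff, forall_get_lt_iff_isStirling, and_assoc]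

lemma IsStirlingPerm.mem_Icc {n x : ℕ} {w : List ℕ} (h : IsStirlingPerm n w) (hx : x ∈ w) :
    x ∈ Finset.Icc 1 n := by
  have hx' := Multiset.mem_coe.2 hx
  rw [(isStirlingPerm_iff.1 h).1, Multiset.mem_nsmul] at hx'
  exact hx'.2

lemma isStirlingPerm_zero_iff {w : List ℕ} : IsStirlingPerm 0 w ↔ w = [] := by
  refine ⟨fun h => length_eq_zero_iff.1 h.1, ?_⟩
  rintro rfl
  exact isStirlingPerm_iff.2 ⟨by simp, fun _ _ h => by simp at h⟩

lemma isStirlingPerm_succ_iff {n : ℕ} {v : List ℕ} :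
    IsStirlingPerm (n + 1) v ↔
      ∃ w i, IsStirlingPerm n w ∧ i ≤ 2 * n ∧ v = w.insertPair (n + 1) i := by
  constructor
  · intro hv
    have hle (x : ℕ) (hx : x ∈ v) : x ≤ n + 1 := (Finset.mem_Icc.1 (hv.mem_Icc hx)).2
    obtain ⟨hcoe, hst⟩ := isStirlingPerm_iff.1 hv
    obtain ⟨A, B, rfl⟩ := hst.exists_eq_append_cons_cons hle (hv.2.1 (n + 1) (by simp))
    rw [← insertPair_append_length] at hcoe hst ⊢
    have hw : IsStirlingPerm n (A ++ B) := by
      refine isStirlingPerm_iff.2 ⟨?_, hst.sublist (sublist_insertPair _ _ _)⟩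
      rwa [coe_insertPair, two_nsmul_Icc_val_succ, Multiset.cons_inj_right,
        Multiset.cons_inj_right] at hcoe
    exact ⟨A ++ B, A.length, hw, by simp [← hw.1], rfl⟩
  · rintro ⟨w, i, hw, -, rfl⟩
    have hlt (x : ℕ) (hx : x ∈ w) : x < n + 1 :=
      Nat.lt_succ_of_le (Finset.mem_Icc.1 (hw.mem_Icc hx)).2
    obtain ⟨hcoe, hst⟩ := isStirlingPerm_iff.1 hw
    exact isStirlingPerm_iff.2
      ⟨by rw [coe_insertPair, two_nsmul_Icc_val_succ, hcoe], hst.insertPair hlt i⟩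

def stirlingInsert (n : ℕ) :
    {w // IsStirlingPerm n w} × Fin (2 * n + 1) → {v // IsStirlingPerm (n + 1) v} :=
  fun p => ⟨p.1.1.insertPair (n + 1) p.2,
    isStirlingPerm_succ_iff.2 ⟨_, _, p.1.2, Nat.lt_succ_iff.1 p.2.2, rfl⟩⟩

lemma stirlingInsert_bijective (n : ℕ) : Function.Bijective (stirlingInsert n) := by
  have hnotMem {w : List ℕ} (hw : IsStirlingPerm n w) : n + 1 ∉ w := fun h => by
    simpa using hw.mem_Icc h
  constructor
  · rintro ⟨⟨w, hw⟩, i⟩ ⟨⟨w', hw'⟩, i'⟩ h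
    have hi : i.1 ≤ w.length := by have := hw.1; omega
    have hi' : i'.1 ≤ w'.length := by have := hw'.1; omega
    obtain ⟨rfl, hii'⟩ :=
      insertPair_inj (hnotMem hw) (hnotMem hw') hi hi' (congrArg Subtype.val h)
    exact Prod.ext rfl (Fin.ext hii')
  · rintro ⟨v, hv⟩
    obtain ⟨w, i, hw, hi, rfl⟩ := isStirlingPerm_succ_iff.1 hv
    exact ⟨(⟨w, hw⟩, ⟨i, by omega⟩), rfl⟩

lemma card_isStirlingPerm_succ (n : ℕ) :
    Nat.card {v // IsStirlingPerm (n + 1) v} =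
      (2 * n + 1) * Nat.card {w // IsStirlingPerm n w} := by
  rw [← Nat.card_eq_of_bijective _ (stirlingInsert_bijective n), Nat.card_prod, Nat.card_fin,
    mul_comm]

/-- The number of Stirling permutations of size `n` is the double factorial `(2n-1)!!`. -/
theorem card_stirling_perms (n : ℕ) :
    Nat.card {w : List ℕ // IsStirlingPerm n w} = Nat.doubleFactorial (2 * n - 1) := by
  induction n with
  | zero => simp [isStirlingPerm_zero_iff]
  | succ n ih =>
    rw [card_isStirlingPerm_succ, ih, show 2 * (n + 1) - 1 = 2 * n + 1 by omega,
      Nat.doubleFactorial_add_one]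
end

section
/- The number of treed permutations of size n equals n! times the n-th Catalan number c_n. -/
/-- A `2`-permutation of its letter set: every letter of the word appears exactly twice. -/
def IsTwoPerm (w : List ℕ) : Prop := ∀ x ∈ w, w.count x = 2

/-- A treed permutation of size `n`: a word in which each letter `1, …, n` appears
exactly twice (so of length `2n`), such that the subword strictly between the two
occurrences of any letter is itself a `2`-permutation of its letter set. -/
def IsTreedPerm (n : ℕ) (w : List ℕ) : Prop :=
  w.length = 2 * n ∧ (∀ k ∈ Finset.Icc 1 n, w.count k = 2) ∧
    ∀ i l : Fin w.length, i < l → w.get i = w.get l →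
      IsTwoPerm ((w.drop ((i : ℕ) + 1)).take ((l : ℕ) - (i : ℕ) - 1))

/-!
Reading a labelled binary tree in Euler-tour order, each label once on entering its node and
once between its two subtrees, gives the word `a (word of left) a (word of right)`. When the
labels are distinct these words are exactly the treed words: the second occurrence of the first
letter of a treed word splits the rest into two treed words. So treed permutations of size `n`
are binary trees with `n` nodes whose preorder labelling is a permutation of `1, …, n`, and such
a tree is a shape (`catalan n` choices) together with that permutation (`n!` choices).
-/

namespace List

variable {α : Type*}

theorem eq_take_append_cons_append_cons {w : List α} {i l : ℕ} (hil : i < l)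
    (hl : l < w.length) :
    w = w.take i ++ w[i] :: ((w.drop (i + 1)).take (l - i - 1) ++ w[l] :: w.drop (l + 1)) := by
  have hdrop : (w.drop (i + 1)).drop (l - i - 1) = w[l] :: w.drop (l + 1) := by
    rw [drop_drop, show i + 1 + (l - i - 1) = l by omega, drop_eq_getElem_cons]
  rw [← hdrop, take_append_drop, ← drop_eq_getElem_cons, take_append_drop]

theorem forall_between_get_iff (P : List α → Prop) (w : List α) :
    (∀ i l : Fin w.length, i < l → w.get i = w.get l →
      P ((w.drop ((i : ℕ) + 1)).take ((l : ℕ) - (i : ℕ) - 1))) ↔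
    ∀ x p q r, w = p ++ x :: (q ++ x :: r) → P q := by
  constructor
  · rintro h x p q r rfl
    have hi : p.length < (p ++ x :: (q ++ x :: r)).length := by simp
    have hl : p.length + 1 + q.length < (p ++ x :: (q ++ x :: r)).length := by simp; omega
    simpa [show p.length + 1 + q.length - p.length - 1 = q.length by omega]
      using h ⟨_, hi⟩ ⟨_, hl⟩ (by simp [Fin.lt_def]; omega) (by simp; grind)
  · intro h i l hil hget
    have hw := eq_take_append_cons_append_cons hil l.2
    simp only [get_eq_getElem] at hget
    exact h _ _ _ _ (hget ▸ hw)

theorem append_cons_cancel_of_notMem [BEq α] [LawfulBEq α] {x : α} {u v u' v' : List α}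
    (h : u ++ x :: v = u' ++ x :: v') (hu : x ∉ u) (hu' : x ∉ u') : u = u' ∧ v = v' := by
  have hlen : u.length = u'.length := by
    simpa [idxOf_append_of_notMem hu, idxOf_append_of_notMem hu'] using congrArg (idxOf x) h
  simpa using append_inj h hlen

theorem exists_eq_append_cons_append_cons_of_count_eq_two [BEq α] [LawfulBEq α] {x : α}
    {w : List α} (hw : w.count x = 2) : ∃ p q r, w = p ++ x :: (q ++ x :: r) := by
  obtain ⟨p, s, rfl, hp⟩ := eq_append_cons_of_mem (count_pos_iff.1 (by omega : 0 < w.count x))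
  have hs : s.count x = 1 := by simp_all [count_eq_zero.2 hp]
  obtain ⟨q, r, rfl⟩ := append_of_mem (count_pos_iff.1 (by omega : 0 < s.count x))
  exact ⟨p, q, r, rfl⟩

theorem middle_eq_of_count_eq_two [BEq α] [LawfulBEq α] {x : α} {p q r p' q' r' : List α}
    (h : p ++ x :: (q ++ x :: r) = p' ++ x :: (q' ++ x :: r'))
    (hc : (p ++ x :: (q ++ x :: r)).count x = 2) : q = q' := by
  have notMem_prefixes : ∀ {p q r : List α}, (p ++ x :: (q ++ x :: r)).count x = 2 →
      x ∉ p ∧ x ∉ q := by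
    intro p q r hc
    simp only [count_append, count_cons_self] at hc
    exact ⟨count_eq_zero.1 (by omega), count_eq_zero.1 (by omega)⟩
  obtain ⟨hp, hq⟩ := notMem_prefixes hc
  obtain ⟨hp', hq'⟩ := notMem_prefixes (h ▸ hc)
  obtain ⟨-, h⟩ := append_cons_cancel_of_notMem h hp hp'
  exact (append_cons_cancel_of_notMem h hq hq').1

theorem perm_append_self_iff [BEq α] [LawfulBEq α] {l m : List α} :
    (l ++ l).Perm (m ++ m) ↔ l.Perm m := by
  simp only [perm_iff_count, count_append]
  exact forall_congr' fun x => by omega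

theorem card_perm_eq_factorial {l : List α} (hl : l.Nodup) :
    Nat.card {m : List α // m.Perm l} = l.length.factorial := by
  classical
  rw [← length_permutations, ← toFinset_card_of_nodup (nodup_permutations l hl),
    ← Nat.card_eq_finsetCard]
  exact Nat.card_congr (Equiv.subtypeEquivRight fun m => by rw [mem_toFinset, mem_permutations])

end List

theorem isTwoPerm_iff_count {w : List ℕ} :
    IsTwoPerm w ↔ ∀ x, w.count x = 0 ∨ w.count x = 2 := by
  refine forall_congr' fun x => ?_
  rw [← List.count_pos_iff]
  omega

theorem count_cons_append_cons (a x : ℕ) (u v : List ℕ) :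
    (a :: (u ++ a :: v)).count x = u.count x + v.count x + if x = a then 2 else 0 := by
  simp only [List.count_cons, List.count_append, beq_iff_eq]
  split_ifs <;> omega

theorem isTwoPerm_of_perm_append_self {w l : List ℕ} (hl : l.Nodup) (h : w.Perm (l ++ l)) :
    IsTwoPerm w := by
  rw [isTwoPerm_iff_count]
  intro x
  have := List.nodup_iff_count_le_one.1 hl x
  rw [h.count_eq, List.count_append]
  omega

/-- `IsTreedPerm` without the alphabet condition, the two equal letters being located by a
splitting of the word rather than by their positions. -/
def IsTreedWord (w : List ℕ) : Prop :=
  IsTwoPerm w ∧ ∀ x p q r, w = p ++ x :: (q ++ x :: r) → IsTwoPerm q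

theorem isTreedWord_nil : IsTreedWord [] :=
  ⟨by simp [IsTwoPerm], by simp⟩

theorem IsTreedWord.of_cons_append_cons {a : ℕ} {u v : List ℕ}
    (h : IsTreedWord (a :: (u ++ a :: v))) : IsTreedWord u ∧ IsTreedWord v := by
  have hu : IsTwoPerm u := h.2 a [] u v rfl
  have hv : IsTwoPerm v := by
    have hw := isTwoPerm_iff_count.1 h.1
    rw [isTwoPerm_iff_count] at hu ⊢
    intro x
    have hux := hu x
    rcases hw x with hwx | hwx <;> rw [count_cons_append_cons] at hwx <;> split_ifs at hwx <;> omega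
  refine ⟨⟨hu, fun x p q r hw => h.2 x (a :: p) q (r ++ a :: v) ?_⟩,
    ⟨hv, fun x p q r hw => h.2 x (a :: (u ++ a :: p)) q r ?_⟩⟩ <;> simp [hw]

theorem IsTreedWord.cons_append_cons {a : ℕ} {u v : List ℕ}
    (h : IsTwoPerm (a :: (u ++ a :: v))) (hu : IsTreedWord u) (hv : IsTreedWord v) :
    IsTreedWord (a :: (u ++ a :: v)) := by
  refine ⟨h, fun x p q r hw => ?_⟩
  have hx : x ∈ a :: (u ++ a :: v) := by simp [hw]
  obtain ⟨p', q', r', hw', hq'⟩ :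
      ∃ p' q' r', a :: (u ++ a :: v) = p' ++ x :: (q' ++ x :: r') ∧ IsTwoPerm q' := by
    by_cases hxa : x = a
    · exact ⟨[], u, v, by simp [hxa], hu.1⟩
    simp only [List.mem_cons, List.mem_append, hxa, false_or] at hx
    rcases hx with hxu | hxv
    · obtain ⟨u₁, u₂, u₃, rfl⟩ :=
        List.exists_eq_append_cons_append_cons_of_count_eq_two (hu.1 x hxu)
      exact ⟨a :: u₁, u₂, u₃ ++ a :: v, by simp, hu.2 x u₁ u₂ u₃ rfl⟩
    · obtain ⟨v₁, v₂, v₃, rfl⟩ :=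
        List.exists_eq_append_cons_append_cons_of_count_eq_two (hv.1 x hxv)
      exact ⟨a :: (u ++ a :: v₁), v₂, v₃, by simp, hv.2 x v₁ v₂ v₃ rfl⟩
  rw [hw'] at hw
  exact List.middle_eq_of_count_eq_two hw (hw' ▸ h x hx) ▸ hq'

namespace BinaryTree

variable {α : Type*}

def preorder : BinaryTree α → List α
  | nil => []
  | node a l r => a :: (preorder l ++ preorder r)

def eulerWord : BinaryTree α → List α
  | nil => []
  | node a l r => a :: (eulerWord l ++ a :: eulerWord r)

theorem length_preorder (t : BinaryTree α) : (preorder t).length = t.numNodes := by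
  induction t with
  | nil => rfl
  | node a l r ihl ihr => simp [preorder, numNodes, ihl, ihr]

theorem count_eulerWord [BEq α] [LawfulBEq α] (t : BinaryTree α) (x : α) :
    (eulerWord t).count x = 2 * (preorder t).count x := by
  induction t with
  | nil => rfl
  | node a l r ihl ihr =>
    simp only [eulerWord, preorder, List.count_cons, List.count_append, ihl, ihr]
    omega

theorem perm_eulerWord [BEq α] [LawfulBEq α] (t : BinaryTree α) :
    (eulerWord t).Perm (preorder t ++ preorder t) := by
  rw [List.perm_iff_count]
  intro x
  rw [count_eulerWord, List.count_append]
  omega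

theorem mem_eulerWord {t : BinaryTree α} {x : α} : x ∈ eulerWord t ↔ x ∈ preorder t := by
  induction t with
  | nil => rfl
  | node a l r ihl ihr => simp [eulerWord, preorder, ihl, ihr]; tauto

theorem isTwoPerm_eulerWord_iff {t : BinaryTree ℕ} :
    IsTwoPerm (eulerWord t) ↔ (preorder t).Nodup := by
  rw [isTwoPerm_iff_count, List.nodup_iff_count_le_one]
  refine forall_congr' fun x => ?_
  rw [count_eulerWord]
  omega

theorem isTreedWord_eulerWord_iff {t : BinaryTree ℕ} :
    IsTreedWord (eulerWord t) ↔ (preorder t).Nodup := by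
  induction t with
  | nil => simpa [eulerWord, preorder] using isTreedWord_nil
  | node a l r ihl ihr =>
    have hnodup : (preorder (node a l r)).Nodup → (preorder l).Nodup ∧ (preorder r).Nodup := by
      simp_all [preorder, List.nodup_append]
    constructor
    · exact fun h => isTwoPerm_eulerWord_iff.1 h.1
    · intro h
      exact IsTreedWord.cons_append_cons (isTwoPerm_eulerWord_iff.2 h)
        (ihl.2 (hnodup h).1) (ihr.2 (hnodup h).2)

theorem eulerWord_injective_of_nodup {t₁ t₂ : BinaryTree ℕ} (h₁ : (preorder t₁).Nodup)
    (h₂ : (preorder t₂).Nodup) (h : eulerWord t₁ = eulerWord t₂) : t₁ = t₂ := by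
  induction t₁ generalizing t₂ with
  | nil => cases t₂ <;> simp_all [eulerWord]
  | node a l r ihl ihr =>
    cases t₂ with
    | nil => simp [eulerWord] at h
    | node b l' r' =>
      obtain ⟨rfl, h⟩ := List.cons_eq_cons.1 h
      simp only [preorder, List.nodup_cons, List.nodup_append, List.mem_append, not_or] at h₁ h₂
      obtain ⟨hl, hr⟩ := List.append_cons_cancel_of_notMem h
        (mt mem_eulerWord.1 h₁.1.1) (mt mem_eulerWord.1 h₂.1.1)
      rw [ihl h₁.2.1 h₂.2.1 hl, ihr h₁.2.2.1 h₂.2.2.1 hr]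

theorem exists_eulerWord_eq {w : List ℕ} (hw : IsTreedWord w) : ∃ t, eulerWord t = w := by
  induction hlen : w.length using Nat.strong_induction_on generalizing w with
  | _ N ih =>
  cases w with
  | nil => exact ⟨nil, rfl⟩
  | cons a w =>
    have ha : a ∈ w := by
      have hcount := hw.1 a (by simp)
      rw [List.count_cons_self] at hcount
      exact List.count_pos_iff.1 (by omega)
    obtain ⟨u, v, rfl, -⟩ := List.eq_append_cons_of_mem ha
    obtain ⟨hu, hv⟩ := hw.of_cons_append_cons
    obtain ⟨l, rfl⟩ := ih u.length (by simp [← hlen]) hu rfl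
    obtain ⟨r, rfl⟩ := ih v.length (by simp [← hlen]; omega) hv rfl
    exact ⟨node a l r, rfl⟩

theorem numNodes_map {β : Type*} (f : α → β) (t : BinaryTree α) :
    (t.map f).numNodes = t.numNodes := by
  induction t with
  | nil => rfl
  | node a l r ihl ihr => simp [map, numNodes, ihl, ihr]

def fill : BinaryTree Unit → List α → BinaryTree α
  | nil, _ => nil
  | node _ _ _, [] => nil
  | node _ l r, x :: L => node x (fill l (L.take l.numNodes)) (fill r (L.drop l.numNodes))

theorem fill_map_preorder (t : BinaryTree α) : fill (t.map fun _ => ()) (preorder t) = t := by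
  induction t with
  | nil => rfl
  | node a l r ihl ihr =>
    rw [map, preorder, fill, numNodes_map, ← length_preorder, List.take_left, List.drop_left,
      ihl, ihr]

theorem map_fill_and_preorder_fill (s : BinaryTree Unit) {L : List α}
    (hL : L.length = s.numNodes) :
    (fill s L).map (fun _ => ()) = s ∧ preorder (fill s L) = L := by
  induction s generalizing L with
  | nil => simp_all [fill, map, preorder, numNodes]
  | node _ l r ihl ihr =>
    cases L with
    | nil => simp [numNodes] at hL
    | cons x L =>
      simp only [numNodes, List.length_cons] at hL
      obtain ⟨hl, hl'⟩ := ihl (L := L.take l.numNodes) (by simp; omega)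
      obtain ⟨hr, hr'⟩ := ihr (L := L.drop l.numNodes) (by simp; omega)
      simp [fill, map, preorder, hl, hl', hr, hr']

def shapeLabelEquiv (P : List α → Prop) {n : ℕ} (hP : ∀ L, P L → L.length = n) :
    {t : BinaryTree α // P (preorder t)} ≃
      {s : BinaryTree Unit // s.numNodes = n} × {L // P L} where
  toFun t :=
    (⟨t.1.map fun _ => (), by rw [numNodes_map, ← length_preorder, hP _ t.2]⟩, ⟨_, t.2⟩)
  invFun sL := ⟨fill sL.1 sL.2, by
    rw [(map_fill_and_preorder_fill _ ((hP _ sL.2.2).trans sL.1.2.symm)).2]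
    exact sL.2.2⟩
  left_inv t := Subtype.ext (fill_map_preorder t.1)
  right_inv sL := by
    obtain ⟨hs, hL⟩ := map_fill_and_preorder_fill sL.1.1 ((hP _ sL.2.2).trans sL.1.2.symm)
    exact Prod.ext (Subtype.ext hs) (Subtype.ext hL)

theorem card_numNodes_eq (n : ℕ) :
    Nat.card {s : BinaryTree Unit // s.numNodes = n} = catalan n := by
  rw [← treesOfNumNodesEq_card_eq_catalan, ← Nat.card_eq_finsetCard]
  exact Nat.card_congr (Equiv.subtypeEquivRight fun s => mem_treesOfNumNodesEq.symm)

end BinaryTree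

theorem perm_range'_append_self_iff {n : ℕ} {w : List ℕ} :
    w.Perm (List.range' 1 n ++ List.range' 1 n) ↔
      w.length = 2 * n ∧ ∀ k ∈ Finset.Icc 1 n, w.count k = 2 := by
  constructor
  · intro h
    refine ⟨by simp [h.length_eq]; omega, fun k hk => ?_⟩
    rw [Finset.mem_Icc] at hk
    simp only [h.count_eq, List.count_append, List.count_range_1']
    split_ifs <;> omega
  · rintro ⟨hlen, hcount⟩
    refine (List.Subperm.perm_of_length_le ?_ (by simp [hlen]; omega)).symm
    refine List.subperm_ext_iff.2 fun x hx => ?_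
    simp only [List.mem_append, List.mem_range'_1, or_self] at hx
    simp only [hcount x (Finset.mem_Icc.2 (by omega)), List.count_append, List.count_range_1']
    split_ifs; omega

theorem isTreedPerm_iff {n : ℕ} {w : List ℕ} :
    IsTreedPerm n w ↔ w.Perm (List.range' 1 n ++ List.range' 1 n) ∧ IsTreedWord w := by
  rw [IsTreedPerm, IsTreedWord, List.forall_between_get_iff, ← and_assoc,
    ← perm_range'_append_self_iff]
  exact ⟨fun h => ⟨h.1, isTwoPerm_of_perm_append_self List.nodup_range' h.1, h.2⟩,
    fun h => ⟨h.1, h.2.2⟩⟩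

namespace BinaryTree

theorem isTreedPerm_eulerWord_iff {n : ℕ} {t : BinaryTree ℕ} :
    IsTreedPerm n (eulerWord t) ↔ (preorder t).Perm (List.range' 1 n) := by
  rw [isTreedPerm_iff, isTreedWord_eulerWord_iff]
  refine ⟨fun h => List.perm_append_self_iff.1 ((perm_eulerWord t).symm.trans h.1), fun h => ?_⟩
  exact ⟨(perm_eulerWord t).trans (List.perm_append_self_iff.2 h),
    h.nodup_iff.2 List.nodup_range'⟩

noncomputable def eulerWordEquiv (n : ℕ) :
    {t : BinaryTree ℕ // (preorder t).Perm (List.range' 1 n)} ≃ {w // IsTreedPerm n w} :=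
  Equiv.ofBijective (fun t => ⟨eulerWord t.1, isTreedPerm_eulerWord_iff.2 t.2⟩) <| by
    refine ⟨fun t₁ t₂ h => Subtype.ext ?_, fun w => ?_⟩
    · exact eulerWord_injective_of_nodup (t₁.2.nodup_iff.2 List.nodup_range')
        (t₂.2.nodup_iff.2 List.nodup_range') (congrArg Subtype.val h)
    · obtain ⟨t, ht⟩ := exists_eulerWord_eq (isTreedPerm_iff.1 w.2).2
      exact ⟨⟨t, isTreedPerm_eulerWord_iff.1 (ht ▸ w.2)⟩, Subtype.ext ht⟩

end BinaryTree

/-- The number of treed permutations of size `n` is `n!` times the `n`-th Catalan number. -/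
theorem card_treed_perms (n : ℕ) :
    Nat.card {w : List ℕ // IsTreedPerm n w} = n.factorial * catalan n := by
  have hlen : ∀ L : List ℕ, L.Perm (List.range' 1 n) → L.length = n := fun L hL => by
    simp [hL.length_eq]
  calc Nat.card {w : List ℕ // IsTreedPerm n w}
      = Nat.card {s : BinaryTree Unit // s.numNodes = n} *
          Nat.card {L : List ℕ // L.Perm (List.range' 1 n)} := by
        rw [← Nat.card_congr (BinaryTree.eulerWordEquiv n),
          Nat.card_congr (BinaryTree.shapeLabelEquiv _ hlen),
          Nat.card_prod]
    _ = n.factorial * catalan n := by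
        rw [BinaryTree.card_numNodes_eq, List.card_perm_eq_factorial List.nodup_range',
          List.length_range', mul_comm]
end

section
/- The depth-first post-order reading of labels defines a bijection between the set of sorted trees of degree n and the symmetric group S_n. -/
/-- An `X`-labelled planar rooted tree: an (unlabelled) root together with an ordered
list of pairs (label of child, subtree rooted at that child). -/
inductive LTree (X : Type) : Type
  | node : List (X × LTree X) → LTree X

/-- The list of labels of the non-root nodes, in depth-first (pre-order) traversal. -/
def LTree.labels {X : Type} : LTree X → List X
  | .node ts => (ts.attach.map (fun p => p.1.1 :: p.1.2.labels)).flatten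
decreasing_by
  obtain ⟨⟨a, b⟩, hm⟩ := p
  have := List.sizeOf_lt_of_mem hm
  simp only [Prod.mk.sizeOf_spec, LTree.node.sizeOf_spec] at *
  omega

/-- The degree of a labelled tree: its number of non-root nodes. -/
def LTree.degree {X : Type} (t : LTree X) : ℕ := t.labels.length

/-- The labels of the children of the root. -/
def LTree.rootLabels {X : Type} : LTree X → List X
  | .node ts => ts.map Prod.fst

/-- A labelled tree is increasing if along every path starting at the root the labels
increase, i.e. every node's label is smaller than the labels of all of its children. -/
def LTree.Increasing : LTree ℕ → Prop
  | .node ts => ∀ p ∈ ts, (∀ l ∈ p.2.rootLabels, p.1 < l) ∧ p.2.Increasing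
decreasing_by
  obtain ⟨a, b⟩ := p
  rename_i hm
  have := List.sizeOf_lt_of_mem hm
  simp only [Prod.mk.sizeOf_spec, LTree.node.sizeOf_spec] at *
  omega

/-- A labelled tree is sorted if the labels of the children of each node (including the
root) increase from left to right. -/
def LTree.SortedChildren : LTree ℕ → Prop
  | .node ts => (ts.map Prod.fst).Chain' (· < ·) ∧ ∀ p ∈ ts, p.2.SortedChildren
decreasing_by
  obtain ⟨a, b⟩ := p
  rename_i hm
  have := List.sizeOf_lt_of_mem hm
  simp [Prod.mk.sizeOf_spec, LTree.node.sizeOf_spec] at this ⊢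
  omega

/-- The depth-first post-order reading of the labels: for each node, traverse its
subtrees from left to right and then read the node's own label. -/
def LTree.post {X : Type} : LTree X → List X
  | .node ts => (ts.attach.map (fun p => p.1.2.post ++ [p.1.1])).flatten
decreasing_by
  obtain ⟨⟨a, b⟩, hm⟩ := p
  have := List.sizeOf_lt_of_mem hm
  simp only [Prod.mk.sizeOf_spec, LTree.node.sizeOf_spec] at *
  omega

/-! In a sorted increasing tree the smallest label is the first child of the root, so the
post-order word is `u ++ a :: v` with `a` its minimum, `u` the word of the subtree below `a` and
`v` the word of the tree formed by the remaining children of the root. Splitting a word at its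
first minimum and recursing on both sides therefore rebuilds the tree (`LTree.ofPost`); on words
without repetitions the tree so built is sorted and increasing. -/

theorem List.min_split_induction {α : Type*} [LinearOrder α] {motive : List α → Prop}
    (nil : motive [])
    (split : ∀ u a v, (∀ x ∈ u, a < x) → (∀ x ∈ v, a ≤ x) →
      motive u → motive v → motive (u ++ a :: v))
    (w : List α) : motive w := by
  by_cases hw : w = []
  · subst hw; exact nil
  set a := w.min hw
  have ha : a ∈ w := min_mem hw
  have hi : w.idxOf a < w.length := idxOf_lt_length_of_mem ha
  have hsplit : w.take (w.idxOf a) ++ a :: w.drop (w.idxOf a + 1) = w := by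
    have hdrop := drop_eq_getElem_cons hi
    rw [getElem_idxOf hi] at hdrop
    rw [← hdrop, take_append_drop]
  have hu : ∀ x ∈ w.take (w.idxOf a), a < x := fun x hx =>
    lt_of_le_of_ne (min_le_of_mem (mem_of_mem_take hx)) fun hax =>
      lt_irrefl _ ((mem_take_iff_idxOf_lt ha).1 (hax ▸ hx))
  have hv : ∀ x ∈ w.drop (w.idxOf a + 1), a ≤ x := fun x hx =>
    min_le_of_mem (mem_of_mem_drop hx)
  rw [← hsplit]
  exact split _ a _ hu hv (min_split_induction nil split _) (min_split_induction nil split _)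
termination_by w.length
decreasing_by
  all_goals
    have := idxOf_lt_length_of_mem (min_mem hw)
    simp only [length_take, length_drop]
    omega

namespace LTree

variable {X : Type}

def children : LTree X → List (X × LTree X)
  | node ts => ts

@[simp] theorem node_children (t : LTree X) : node t.children = t := by
  cases t; rfl

theorem cons_induction {motive : LTree X → Prop} (nil : motive (node []))
    (cons : ∀ a t ts, motive t → motive (node ts) → motive (node ((a, t) :: ts))) :
    ∀ t, motive t
  | node [] => nil
  | node ((a, t) :: ts) =>
    cons a t ts (cons_induction nil cons t) (cons_induction nil cons (node ts))
decreasing_by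
  all_goals simp only [List.cons.sizeOf_spec, Prod.mk.sizeOf_spec, node.sizeOf_spec]; omega

theorem post_node (ts : List (X × LTree X)) :
    (node ts).post = (ts.map fun p => p.2.post ++ [p.1]).flatten := by
  rw [post, List.attach_map_val (f := fun p : X × LTree X => p.2.post ++ [p.1])]

theorem labels_node (ts : List (X × LTree X)) :
    (node ts).labels = (ts.map fun p => p.1 :: p.2.labels).flatten := by
  rw [labels, List.attach_map_val (f := fun p : X × LTree X => p.1 :: p.2.labels)]

@[simp] theorem post_nil : (node [] : LTree X).post = [] := by
  simp [post_node]

@[simp] theorem post_cons (a : X) (t : LTree X) (ts : List (X × LTree X)) :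
    (node ((a, t) :: ts)).post = t.post ++ a :: (node ts).post := by
  simp [post_node]

@[simp] theorem labels_nil : (node [] : LTree X).labels = [] := by
  simp [labels_node]

@[simp] theorem labels_cons (a : X) (t : LTree X) (ts : List (X × LTree X)) :
    (node ((a, t) :: ts)).labels = a :: (t.labels ++ (node ts).labels) := by
  simp [labels_node]

@[simp] theorem rootLabels_nil : (node [] : LTree X).rootLabels = [] := rfl

@[simp] theorem rootLabels_cons (a : X) (t : LTree X) (ts : List (X × LTree X)) :
    (node ((a, t) :: ts)).rootLabels = a :: (node ts).rootLabels := rfl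

@[simp] theorem increasing_nil : (node [] : LTree ℕ).Increasing := by
  simp [Increasing]

@[simp] theorem increasing_cons (a : ℕ) (t : LTree ℕ) (ts : List (ℕ × LTree ℕ)) :
    (node ((a, t) :: ts)).Increasing ↔
      (∀ l ∈ t.rootLabels, a < l) ∧ t.Increasing ∧ (node ts).Increasing := by
  rw [Increasing, Increasing, List.forall_mem_cons, and_assoc]

theorem sortedChildren_node_iff_pairwise (ts : List (ℕ × LTree ℕ)) :
    (node ts).SortedChildren ↔
      (ts.map Prod.fst).Pairwise (· < ·) ∧ ∀ p ∈ ts, p.2.SortedChildren := by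
  rw [SortedChildren]
  exact and_congr_left' List.isChain_iff_pairwise

@[simp] theorem sortedChildren_nil : (node [] : LTree ℕ).SortedChildren := by
  simp [sortedChildren_node_iff_pairwise]

@[simp] theorem sortedChildren_cons (a : ℕ) (t : LTree ℕ) (ts : List (ℕ × LTree ℕ)) :
    (node ((a, t) :: ts)).SortedChildren ↔
      (∀ b ∈ (node ts).rootLabels, a < b) ∧ t.SortedChildren ∧ (node ts).SortedChildren := by
  simp only [sortedChildren_node_iff_pairwise, List.map_cons, List.pairwise_cons,
    List.forall_mem_cons, rootLabels]
  tauto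

theorem post_perm_labels (t : LTree X) : t.post.Perm t.labels := by
  induction t using cons_induction with
  | nil => simp
  | cons a t ts iht ihts => simpa using List.perm_middle.trans ((iht.append ihts).cons a)

theorem rootLabels_subset_post (t : LTree X) : t.rootLabels ⊆ t.post := by
  induction t using cons_induction with
  | nil => simp
  | cons a t ts _ ih =>
    rw [rootLabels_cons, post_cons, List.cons_subset]
    exact ⟨by simp, fun x hx => by simp [ih hx]⟩

theorem Increasing.lt_of_mem_post {t : LTree ℕ} (ht : t.Increasing) {a : ℕ}
    (ha : ∀ x ∈ t.rootLabels, a < x) : ∀ y ∈ t.post, a < y := by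
  induction t using cons_induction generalizing a with
  | nil => simp
  | cons b s ts ihs ihts =>
    obtain ⟨hsb, hs, hts⟩ := (increasing_cons b s ts).1 ht
    simp only [rootLabels_cons, List.forall_mem_cons] at ha
    simp only [post_cons, List.mem_append, List.mem_cons]
    rintro y (hy | rfl | hy)
    · exact ha.1.trans (ihs hs hsb y hy)
    · exact ha.1
    · exact ihts hts ha.2 y hy

section ofPost

variable {α : Type} [LinearOrder α]

def ofPost (w : List α) : LTree α :=
  if h : w = [] then node [] else
    let i := w.idxOf (w.min h)
    node ((w.min h, ofPost (w.take i)) :: (ofPost (w.drop (i + 1))).children)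
termination_by w.length
decreasing_by
  all_goals
    have := List.idxOf_lt_length_of_mem (List.min_mem h)
    simp only [List.length_take, List.length_drop]
    omega

@[simp] theorem ofPost_nil : ofPost ([] : List α) = node [] := by
  rw [ofPost, dif_pos rfl]

theorem ofPost_append_cons {u v : List α} {a : α} (hu : ∀ x ∈ u, a < x) (hv : ∀ x ∈ v, a ≤ x) :
    ofPost (u ++ a :: v) = node ((a, ofPost u) :: (ofPost v).children) := by
  have hmin : (u ++ a :: v).min (by simp) = a :=
    (List.min_eq_iff _).2 ⟨by simp, by grind⟩
  have hidx : (u ++ a :: v).idxOf a = u.length := by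
    rw [List.idxOf_append_of_notMem fun h => lt_irrefl a (hu a h), List.idxOf_cons_self,
      add_zero]
  rw [ofPost, dif_neg (by simp)]
  simp only [hmin, hidx, List.take_left' rfl]
  rw [List.append_cons u a v, List.drop_left' (by simp)]

theorem post_ofPost (w : List α) : (ofPost w).post = w := by
  induction w using List.min_split_induction with
  | nil => simp
  | split u a v hu hv ihu ihv =>
    rw [ofPost_append_cons hu hv, post_cons, node_children, ihu, ihv]

theorem rootLabels_ofPost_subset (w : List α) : (ofPost w).rootLabels ⊆ w := by
  simpa only [post_ofPost] using rootLabels_subset_post (ofPost w)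

end ofPost

theorem increasing_ofPost (w : List ℕ) : (ofPost w).Increasing := by
  induction w using List.min_split_induction with
  | nil => simp
  | split u a v hu hv ihu ihv =>
    rw [ofPost_append_cons hu hv, increasing_cons, node_children]
    exact ⟨fun l hl => hu l (rootLabels_ofPost_subset u hl), ihu, ihv⟩

theorem sortedChildren_ofPost {w : List ℕ} (hw : w.Nodup) : (ofPost w).SortedChildren := by
  induction w using List.min_split_induction with
  | nil => simp
  | split u a v hu hv ihu ihv =>
    rw [List.nodup_append, List.nodup_cons] at hw
    rw [ofPost_append_cons hu hv, sortedChildren_cons, node_children]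
    refine ⟨fun b hb => ?_, ihu hw.1, ihv hw.2.1.2⟩
    have hbv := rootLabels_ofPost_subset v hb
    exact lt_of_le_of_ne (hv b hbv) fun hab => hw.2.1.1 (hab ▸ hbv)

theorem ofPost_post {t : LTree ℕ} (hinc : t.Increasing) (hsort : t.SortedChildren) :
    ofPost t.post = t := by
  induction t using cons_induction with
  | nil => simp
  | cons a s ts ihs ihts =>
    obtain ⟨hsa, hs, hts⟩ := (increasing_cons a s ts).1 hinc
    obtain ⟨htsa, hs', hts'⟩ := (sortedChildren_cons a s ts).1 hsort
    rw [post_cons, ofPost_append_cons (hs.lt_of_mem_post hsa)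
      (fun y hy => (hts.lt_of_mem_post htsa y hy).le), ihs hs hs', ihts hts hts']
    rfl

end LTree

/-- The depth-first post-order reading of labels is a bijection between the set of
sorted trees of degree `n` and the set of permutations of `{1, …, n}` (written as
words, i.e. rearrangements of `(1, …, n)`). -/
theorem post_bijOn_sorted (n : ℕ) :
    Set.BijOn LTree.post
      {t : LTree ℕ | t.labels.Perm (List.range' 1 n) ∧ t.Increasing ∧ t.SortedChildren}
      {w : List ℕ | w.Perm (List.range' 1 n)} := by
  refine Set.InvOn.bijOn (f' := LTree.ofPost)
    ⟨fun t ht => LTree.ofPost_post ht.2.1 ht.2.2, fun w _ => LTree.post_ofPost w⟩ ?_ ?_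
  · exact fun t ht => (LTree.post_perm_labels t).trans ht.1
  · intro w hw
    have hlabels : (LTree.ofPost w).labels.Perm w := by
      simpa only [LTree.post_ofPost] using (LTree.post_perm_labels (LTree.ofPost w)).symm
    exact ⟨hlabels.trans hw, LTree.increasing_ofPost w,
      LTree.sortedChildren_ofPost (hw.nodup_iff.2 List.nodup_range')⟩
end
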